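/- Let D be a self-adjoint operator on a finite-dimensional complex inner product space, let ε₁, ε₂ be constants with 0 < ε₂ < 1/4, let ξ₁,…,ξ_L be vectors and μ₁,…,μ_L real numbers such that: (i) ε₂·(max μ_ℓ − min μ_ℓ)² ≤ ε₁; (ii) |1 − ‖ξ_ℓ‖²| ≤ ε₂ and Σ_{ℓ'≠ℓ}|⟨ξ_{ℓ'},ξ_ℓ⟩| ≤ ε₂ for all ℓ; (iii) ‖(D − μ_ℓ)ξ_ℓ‖² ≤ ε₁ for all ℓ; (iv) for all ℓ and all μ ∈ [min μ_ℓ, max μ_ℓ], Σ_{ℓ'≠ℓ}|⟨(D−μ)ξ_{ℓ'}, (D−μ)ξ_ℓ⟩| ≤ ε₁. Then there exist L eigenvalues λ₁,…,λ_L of D (counted with multiplicity) with |λ_ℓ − μ_ℓ| ≤ 4√ε₁ for every ℓ. -/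

import Mathlib

open scoped ComplexInnerProductSpace

open Finset

open Finset
section Helpers
variable {H : Type*} [NormedAddCommGroup H] [InnerProductSpace ℂ H]


lemma sum_erase_comm' {ι β : Type*} [DecidableEq ι] [AddCommGroup β] (S : Finset ι)
    (F : ι → ι → β) :
    ∑ ℓ ∈ S, ∑ ℓ' ∈ S.erase ℓ, F ℓ ℓ' = ∑ ℓ' ∈ S, ∑ ℓ ∈ S.erase ℓ', F ℓ ℓ' := by
  have h1 : ∀ ℓ ∈ S, ∑ ℓ' ∈ S.erase ℓ, F ℓ ℓ' = (∑ ℓ' ∈ S, F ℓ ℓ') - F ℓ ℓ :=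
    fun ℓ hℓ => Finset.sum_erase_eq_sub hℓ
  have h2 : ∀ ℓ' ∈ S, ∑ ℓ ∈ S.erase ℓ', F ℓ ℓ' = (∑ ℓ ∈ S, F ℓ ℓ') - F ℓ' ℓ' :=
    fun ℓ' hℓ' => Finset.sum_erase_eq_sub hℓ'
  rw [Finset.sum_congr rfl h1, Finset.sum_congr rfl h2, Finset.sum_sub_distrib,
    Finset.sum_sub_distrib, Finset.sum_comm]

lemma offdiag_weight_bound {ι : Type*} [DecidableEq ι] (S : Finset ι) (r : ι → ℝ)
    (w : ι → ι → ℝ) (e : ℝ)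
    (hr : ∀ ℓ, 0 ≤ r ℓ) (hw : ∀ ℓ ℓ', w ℓ ℓ' = w ℓ' ℓ) (hw0 : ∀ ℓ ℓ', 0 ≤ w ℓ ℓ')
    (hrow : ∀ ℓ ∈ S, ∑ ℓ' ∈ S.erase ℓ, w ℓ' ℓ ≤ e) :
    ∑ ℓ ∈ S, ∑ ℓ' ∈ S.erase ℓ, r ℓ' * r ℓ * w ℓ' ℓ ≤ e * ∑ ℓ ∈ S, r ℓ ^ 2 := by
  have step1 : ∑ ℓ ∈ S, ∑ ℓ' ∈ S.erase ℓ, r ℓ' * r ℓ * w ℓ' ℓ ≤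
      ∑ ℓ ∈ S, ∑ ℓ' ∈ S.erase ℓ, (r ℓ' ^ 2 / 2 * w ℓ' ℓ + r ℓ ^ 2 / 2 * w ℓ' ℓ) := by
    refine Finset.sum_le_sum fun ℓ _ => Finset.sum_le_sum fun ℓ' _ => ?_
    nlinarith [mul_le_mul_of_nonneg_right (sq_nonneg (r ℓ - r ℓ')) (hw0 ℓ' ℓ)]
  have step2 : ∑ ℓ ∈ S, ∑ ℓ' ∈ S.erase ℓ, (r ℓ' ^ 2 / 2 * w ℓ' ℓ + r ℓ ^ 2 / 2 * w ℓ' ℓ)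
      = ∑ ℓ ∈ S, ∑ ℓ' ∈ S.erase ℓ, r ℓ' ^ 2 / 2 * w ℓ' ℓ
        + ∑ ℓ ∈ S, ∑ ℓ' ∈ S.erase ℓ, r ℓ ^ 2 / 2 * w ℓ' ℓ := by
    rw [← Finset.sum_add_distrib]
    exact Finset.sum_congr rfl fun ℓ _ => Finset.sum_add_distrib
  have step3 : ∑ ℓ ∈ S, ∑ ℓ' ∈ S.erase ℓ, r ℓ' ^ 2 / 2 * w ℓ' ℓ
      = ∑ ℓ ∈ S, ∑ ℓ' ∈ S.erase ℓ, r ℓ ^ 2 / 2 * w ℓ ℓ' :=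
    sum_erase_comm' S (fun ℓ ℓ' => r ℓ' ^ 2 / 2 * w ℓ' ℓ)
  have step4 : ∑ ℓ ∈ S, ∑ ℓ' ∈ S.erase ℓ, r ℓ ^ 2 / 2 * w ℓ ℓ' ≤ ∑ ℓ ∈ S, r ℓ ^ 2 / 2 * e := by
    refine Finset.sum_le_sum fun ℓ hℓ => ?_
    rw [← Finset.mul_sum]
    have h : ∑ ℓ' ∈ S.erase ℓ, w ℓ ℓ' = ∑ ℓ' ∈ S.erase ℓ, w ℓ' ℓ :=
      Finset.sum_congr rfl fun ℓ' _ => hw ℓ ℓ'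
    rw [h]
    exact mul_le_mul_of_nonneg_left (hrow ℓ hℓ) (by positivity)
  have step5 : ∑ ℓ ∈ S, ∑ ℓ' ∈ S.erase ℓ, r ℓ ^ 2 / 2 * w ℓ' ℓ ≤ ∑ ℓ ∈ S, r ℓ ^ 2 / 2 * e := by
    refine Finset.sum_le_sum fun ℓ hℓ => ?_
    rw [← Finset.mul_sum]
    exact mul_le_mul_of_nonneg_left (hrow ℓ hℓ) (by positivity)
  have last : ∑ ℓ ∈ S, r ℓ ^ 2 / 2 * e + ∑ ℓ ∈ S, r ℓ ^ 2 / 2 * e = e * ∑ ℓ ∈ S, r ℓ ^ 2 := by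
    rw [← Finset.sum_add_distrib, Finset.mul_sum]
    exact Finset.sum_congr rfl fun ℓ _ => by ring
  calc ∑ ℓ ∈ S, ∑ ℓ' ∈ S.erase ℓ, r ℓ' * r ℓ * w ℓ' ℓ
      ≤ _ := step1
    _ = _ := step2
    _ ≤ ∑ ℓ ∈ S, r ℓ ^ 2 / 2 * e + ∑ ℓ ∈ S, r ℓ ^ 2 / 2 * e := by
        rw [step3]; exact add_le_add step4 step5
    _ = e * ∑ ℓ ∈ S, r ℓ ^ 2 := last

lemma gram_bounds {ι : Type*} [DecidableEq ι] (S : Finset ι) (c : ι → ℂ) (x : ι → H) (e : ℝ)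
    (hrow : ∀ ℓ ∈ S, ∑ ℓ' ∈ S.erase ℓ, ‖⟪x ℓ', x ℓ⟫‖ ≤ e) :
    |‖∑ ℓ ∈ S, c ℓ • x ℓ‖ ^ 2 - ∑ ℓ ∈ S, ‖c ℓ‖ ^ 2 * ‖x ℓ‖ ^ 2| ≤ e * ∑ ℓ ∈ S, ‖c ℓ‖ ^ 2 := by
  set v := ∑ ℓ ∈ S, c ℓ • x ℓ with hv
  have expand : (⟪v, v⟫ : ℂ) = ∑ ℓ ∈ S, ∑ ℓ' ∈ S, (starRingEnd ℂ) (c ℓ') * c ℓ * ⟪x ℓ', x ℓ⟫ := by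
    rw [hv, sum_inner, Finset.sum_comm]
    refine Finset.sum_congr rfl fun ℓ' _ => ?_
    rw [inner_smul_left, inner_sum, Finset.mul_sum]
    refine Finset.sum_congr rfl fun ℓ _ => ?_
    rw [inner_smul_right]; ring
  have expand2 : (⟪v, v⟫ : ℂ) = ∑ ℓ ∈ S, ((starRingEnd ℂ) (c ℓ) * c ℓ * ⟪x ℓ, x ℓ⟫
      + ∑ ℓ' ∈ S.erase ℓ, (starRingEnd ℂ) (c ℓ') * c ℓ * ⟪x ℓ', x ℓ⟫) := by
    rw [expand]
    exact Finset.sum_congr rfl fun ℓ hℓ =>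
      (Finset.add_sum_erase S (fun ℓ' => (starRingEnd ℂ) (c ℓ') * c ℓ * ⟪x ℓ', x ℓ⟫) hℓ).symm
  have hre : ‖v‖ ^ 2 = ∑ ℓ ∈ S, (‖c ℓ‖ ^ 2 * ‖x ℓ‖ ^ 2
      + ∑ ℓ' ∈ S.erase ℓ, RCLike.re ((starRingEnd ℂ) (c ℓ') * c ℓ * ⟪x ℓ', x ℓ⟫)) := by
    rw [← inner_self_eq_norm_sq (𝕜 := ℂ) v, expand2]
    rw [map_sum]
    refine Finset.sum_congr rfl fun ℓ _ => ?_
    have hdiag : RCLike.re ((starRingEnd ℂ) (c ℓ) * c ℓ * ⟪x ℓ, x ℓ⟫) = ‖c ℓ‖ ^ 2 * ‖x ℓ‖ ^ 2 := by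
      rw [RCLike.conj_mul, inner_self_eq_norm_sq_to_K]
      norm_cast
    rw [map_add, map_sum, hdiag]
  have key : |∑ ℓ ∈ S, ∑ ℓ' ∈ S.erase ℓ, RCLike.re ((starRingEnd ℂ) (c ℓ') * c ℓ * ⟪x ℓ', x ℓ⟫)|
      ≤ e * ∑ ℓ ∈ S, ‖c ℓ‖ ^ 2 := by
    have habs : ∀ ℓ ℓ', |RCLike.re ((starRingEnd ℂ) (c ℓ') * c ℓ * ⟪x ℓ', x ℓ⟫)|
        ≤ ‖c ℓ'‖ * ‖c ℓ‖ * ‖⟪x ℓ', x ℓ⟫‖ := by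
      intro ℓ ℓ'
      calc |RCLike.re ((starRingEnd ℂ) (c ℓ') * c ℓ * ⟪x ℓ', x ℓ⟫)|
          ≤ ‖(starRingEnd ℂ) (c ℓ') * c ℓ * ⟪x ℓ', x ℓ⟫‖ := RCLike.abs_re_le_norm _
        _ = ‖c ℓ'‖ * ‖c ℓ‖ * ‖⟪x ℓ', x ℓ⟫‖ := by
            rw [norm_mul, norm_mul, RCLike.norm_conj]
    calc |∑ ℓ ∈ S, ∑ ℓ' ∈ S.erase ℓ, RCLike.re ((starRingEnd ℂ) (c ℓ') * c ℓ * ⟪x ℓ', x ℓ⟫)|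
        ≤ ∑ ℓ ∈ S, |∑ ℓ' ∈ S.erase ℓ, RCLike.re ((starRingEnd ℂ) (c ℓ') * c ℓ * ⟪x ℓ', x ℓ⟫)| :=
          Finset.abs_sum_le_sum_abs _ _
      _ ≤ ∑ ℓ ∈ S, ∑ ℓ' ∈ S.erase ℓ, |RCLike.re ((starRingEnd ℂ) (c ℓ') * c ℓ * ⟪x ℓ', x ℓ⟫)| :=
          Finset.sum_le_sum fun ℓ _ => Finset.abs_sum_le_sum_abs _ _
      _ ≤ ∑ ℓ ∈ S, ∑ ℓ' ∈ S.erase ℓ, ‖c ℓ'‖ * ‖c ℓ‖ * ‖⟪x ℓ', x ℓ⟫‖ :=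
          Finset.sum_le_sum fun ℓ _ => Finset.sum_le_sum fun ℓ' _ => habs ℓ ℓ'
      _ ≤ e * ∑ ℓ ∈ S, ‖c ℓ‖ ^ 2 := by
          refine offdiag_weight_bound S (fun ℓ => ‖c ℓ‖) (fun ℓ' ℓ => ‖⟪x ℓ', x ℓ⟫‖) e
            (fun ℓ => norm_nonneg _) (fun ℓ ℓ' => norm_inner_symm _ _)
            (fun ℓ ℓ' => norm_nonneg _) hrow
  rw [hre]
  rw [Finset.sum_add_distrib]
  simpa using key


lemma parseval_sq {n : ℕ} (f : OrthonormalBasis (Fin n) ℂ H) (w : H) :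
    ‖w‖ ^ 2 = ∑ j, ‖(⟪f j, w⟫ : ℂ)‖ ^ 2 := by
  rw [← inner_self_eq_norm_sq (𝕜 := ℂ) w, ← OrthonormalBasis.sum_inner_mul_inner f w w]
  rw [map_sum]
  refine Finset.sum_congr rfl fun j _ => ?_
  rw [← inner_conj_symm w (f j), RCLike.conj_mul]
  norm_cast

-- per-ℓ numeric inequality, ε₁ > 0 case
lemma gluing_numeric (r s W a ε₁ ε₂ : ℝ) (hr : 0 < r) (hr2 : r ^ 2 = ε₁)
    (hs : 0 ≤ s) (hs2 : s ^ 2 = 1 + ε₂) (hε₂0 : 0 < ε₂) (hε₂ : ε₂ < 1 / 4)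
    (ha0 : 0 ≤ a) (haW : a ≤ W) (hsp : ε₂ * W ^ 2 ≤ ε₁) :
    (r + a * s) ^ 2 + ε₁ + 4 * ((r + (|W - 2 * a| / 2) * s) ^ 2 + ε₁)
      + ((r + (W - a) * s) ^ 2 + ε₁)
    < (1 - 2 * ε₂) * (2 * (3 * (4 * r) ^ 2 + 3 * (4 * r) * W + W ^ 2)) := by
  set q := |W - 2 * a| with hqdef
  have hq0 : 0 ≤ q := abs_nonneg _
  have hq2 : q ^ 2 = (W - 2 * a) ^ 2 := sq_abs _
  have hqW : q ≤ W := by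
    rw [hqdef, abs_le]; constructor <;> linarith
  have hW0 : 0 ≤ W := le_trans ha0 haW
  have hs76 : s ≤ 7 / 6 := by nlinarith
  -- step 1 : LHS ≤ 12 ε₁ + 6 r s W + 2 s² W²
  have step1 : (r + a * s) ^ 2 + ε₁ + 4 * ((r + (q / 2) * s) ^ 2 + ε₁)
      + ((r + (W - a) * s) ^ 2 + ε₁) ≤ 12 * ε₁ + 6 * (r * s * W) + 2 * (s ^ 2 * W ^ 2) := by
    nlinarith [mul_nonneg ha0 (sub_nonneg.2 haW), sq_nonneg s,
      mul_nonneg (mul_nonneg hr.le hs) (sub_nonneg.2 hqW),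
      mul_nonneg (mul_nonneg ha0 (sub_nonneg.2 haW)) (sq_nonneg s), hr2]
  have step2 : 12 * ε₁ + 6 * (r * s * W) + 2 * (s ^ 2 * W ^ 2)
      < (1 - 2 * ε₂) * (2 * (3 * (4 * r) ^ 2 + 3 * (4 * r) * W + W ^ 2)) := by
    have hrW : 0 ≤ r * W := mul_nonneg hr.le hW0
    have h6s : 6 * (r * s * W) ≤ 7 * (r * W) := by nlinarith
    nlinarith [mul_le_mul_of_nonneg_right hε₂.le hrW, mul_pos hr hr, hsp,
      mul_le_mul_of_nonneg_right hε₂.le (mul_pos hr hr).le]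
  calc (r + a * s) ^ 2 + ε₁ + 4 * ((r + (q / 2) * s) ^ 2 + ε₁) + ((r + (W - a) * s) ^ 2 + ε₁)
      ≤ 12 * ε₁ + 6 * (r * s * W) + 2 * (s ^ 2 * W ^ 2) := step1
    _ < _ := step2
lemma gluing_envelope (δ m M lam : ℝ) (hδ : 0 ≤ δ) (hmM : m ≤ M)
    (h : lam ≤ m - δ ∨ M + δ ≤ lam) :
    2 * (3 * δ ^ 2 + 3 * δ * (M - m) + (M - m) ^ 2)
      ≤ (lam - m) ^ 2 + 4 * (lam - (m + M) / 2) ^ 2 + (lam - M) ^ 2 := by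
  rcases h with h | h
  · nlinarith [mul_nonneg (by linarith : (0:ℝ) ≤ m - δ - lam) (by linarith : (0:ℝ) ≤ M + δ - lam)]
  · nlinarith [mul_nonneg (by linarith : (0:ℝ) ≤ lam - m + δ) (by linarith : (0:ℝ) ≤ lam - M - δ)]
end Helpers


set_option maxHeartbeats 2000000 in
lemma glue_chain_case {H : Type*} [NormedAddCommGroup H] [InnerProductSpace ℂ H] [FiniteDimensional ℂ H]
    (D : H →ₗ[ℂ] H) (hD : D.IsSymmetric) {L : ℕ} (ε₁ ε₂ : ℝ)
    (hε₂0 : 0 < ε₂) (hε₂ : ε₂ < 1 / 4)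
    (ξ : Fin L → H) (μ : Fin L → ℝ)
    (hspread : ∀ ℓ ℓ', ε₂ * (μ ℓ - μ ℓ') ^ 2 ≤ ε₁)
    (hnorm : ∀ ℓ, |1 - ‖ξ ℓ‖ ^ 2| ≤ ε₂)
    (hoff : ∀ ℓ, ∑ ℓ' ∈ Finset.univ.erase ℓ, ‖⟪ξ ℓ', ξ ℓ⟫‖ ≤ ε₂)
    (happrox : ∀ ℓ, ‖D (ξ ℓ) - (μ ℓ : ℂ) • ξ ℓ‖ ^ 2 ≤ ε₁)
    (hDoff : ∀ ℓ, ∀ ν : ℝ, (∃ ℓ₁ ℓ₂, μ ℓ₁ ≤ ν ∧ ν ≤ μ ℓ₂) →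
      ∑ ℓ' ∈ Finset.univ.erase ℓ,
        ‖⟪D (ξ ℓ') - (ν : ℂ) • ξ ℓ', D (ξ ℓ) - (ν : ℂ) • ξ ℓ⟫‖ ≤ ε₁)
    {n : ℕ} (hn : Module.finrank ℂ H = n)
    (S : Finset (Fin L)) (hSne : S.Nonempty)
    (ℓm ℓM : Fin L) (hℓm : ℓm ∈ S) (hℓM : ℓM ∈ S)
    (hmin : ∀ ℓ ∈ S, μ ℓm ≤ μ ℓ) (hmax : ∀ ℓ ∈ S, μ ℓ ≤ μ ℓM)
    (hchain : ∀ x : ℝ, μ ℓm ≤ x → x ≤ μ ℓM →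
      ∃ ℓ ∈ S, |x - μ ℓ| ≤ 4 * Real.sqrt ε₁) :
    S.card ≤ (S.biUnion (fun ℓ => Finset.univ.filter
      (fun j => |hD.eigenvalues hn j - μ ℓ| ≤ 4 * Real.sqrt ε₁))).card := by
  set r := Real.sqrt ε₁ with hrdef
  set δ := 4 * r with hδdef
  set f := hD.eigenvectorBasis hn with hfdef
  set lam := hD.eigenvalues hn with hlamdef
  set t : Fin L → Finset (Fin n) :=
    fun ℓ => Finset.univ.filter (fun j => |lam j - μ ℓ| ≤ δ) with htdef
  by_contra hcard
  push_neg at hcard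
  set J := S.biUnion t with hJdef
  -- ε₁ is nonnegative
  have hε₁0 : 0 ≤ ε₁ := le_trans (sq_nonneg _) (happrox ℓm)
  have hr2 : r ^ 2 = ε₁ := Real.sq_sqrt hε₁0
  have hr0 : 0 ≤ r := Real.sqrt_nonneg _
  -- a nonzero kernel element
  have hTex : ∃ c : Fin L → ℂ, (∃ ℓ ∈ S, c ℓ ≠ 0) ∧ (∀ ℓ, ℓ ∉ S → c ℓ = 0) ∧
      (∀ j ∈ J, ∑ ℓ ∈ S, c ℓ * ⟪f j, ξ ℓ⟫ = 0) := by
    classical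
    let T : (↥S → ℂ) →ₗ[ℂ] (↥J → ℂ) :=
      { toFun := fun c j => ∑ ℓ : ↥S, c ℓ * ⟪f ↑j, ξ ↑ℓ⟫
        map_add' := by
          intro c₁ c₂; funext j
          simp [add_mul, Finset.sum_add_distrib]
        map_smul' := by
          intro m c₁; funext j
          simp [Finset.mul_sum, mul_assoc] }
    have hninj : ¬ Function.Injective T := by
      intro hinj
      have hle := LinearMap.finrank_le_finrank_of_injective hinj
      rw [Module.finrank_fintype_fun_eq_card, Module.finrank_fintype_fun_eq_card,
        Fintype.card_coe, Fintype.card_coe] at hle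
      omega
    rw [Function.not_injective_iff] at hninj
    obtain ⟨c₁, c₂, hceq, hcne⟩ := hninj
    set c₀ : ↥S → ℂ := c₁ - c₂ with hc₀def
    have hc₀ne : c₀ ≠ 0 := sub_ne_zero.2 hcne
    have hTc₀ : T c₀ = 0 := by rw [hc₀def, map_sub, hceq, sub_self]
    refine ⟨fun ℓ => if h : ℓ ∈ S then c₀ ⟨ℓ, h⟩ else 0, ?_, ?_, ?_⟩
    · obtain ⟨ℓ, hℓ⟩ := Function.ne_iff.1 hc₀ne
      exact ⟨↑ℓ, ℓ.2, by simpa [dif_pos ℓ.2] using hℓ⟩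
    · intro ℓ hℓ; simp [dif_neg hℓ]
    · intro j hj
      have hj' := congrFun hTc₀ ⟨j, hj⟩
      simp only [Pi.zero_apply] at hj'
      rw [← Finset.sum_coe_sort S]
      calc ∑ ℓ : ↥S, (if h : ↑ℓ ∈ S then c₀ ⟨↑ℓ, h⟩ else 0) * ⟪f j, ξ ↑ℓ⟫
          = ∑ ℓ : ↥S, c₀ ℓ * ⟪f j, ξ ↑ℓ⟫ := by
            refine Finset.sum_congr rfl fun ℓ _ => ?_
            rw [dif_pos ℓ.2]
        _ = 0 := hj'
  obtain ⟨c, ⟨ℓ₀, hℓ₀S, hℓ₀ne⟩, hcsupp, hker⟩ := hTex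
  set v := ∑ ℓ ∈ S, c ℓ • ξ ℓ with hvdef
  set C := ∑ ℓ ∈ S, ‖c ℓ‖ ^ 2 with hCdef
  have hC : 0 < C := by
    exact Finset.sum_pos' (fun ℓ _ => sq_nonneg _)
      ⟨ℓ₀, hℓ₀S, pow_pos (norm_pos_iff.2 hℓ₀ne) 2⟩
  -- lower bound
  have hrowξ : ∀ ℓ ∈ S, ∑ ℓ' ∈ S.erase ℓ, ‖(⟪ξ ℓ', ξ ℓ⟫ : ℂ)‖ ≤ ε₂ := by
    intro ℓ _
    refine le_trans (Finset.sum_le_sum_of_subset_of_nonneg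
      (Finset.erase_subset_erase ℓ (Finset.subset_univ S))
      (fun _ _ _ => norm_nonneg _)) (hoff ℓ)
  have hlow : (1 - 2 * ε₂) * C ≤ ‖v‖ ^ 2 := by
    have hgb := gram_bounds S c ξ ε₂ hrowξ
    have hdiag : ∑ ℓ ∈ S, ‖c ℓ‖ ^ 2 * (1 - ε₂) ≤ ∑ ℓ ∈ S, ‖c ℓ‖ ^ 2 * ‖ξ ℓ‖ ^ 2 := by
      refine Finset.sum_le_sum fun ℓ _ => ?_
      have h1 : 1 - ε₂ ≤ ‖ξ ℓ‖ ^ 2 := by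
        have := abs_le.1 (hnorm ℓ); linarith [this.2]
      exact mul_le_mul_of_nonneg_left h1 (sq_nonneg _)
    have hd2 : ∑ ℓ ∈ S, ‖c ℓ‖ ^ 2 * (1 - ε₂) = (1 - ε₂) * C := by
      rw [hCdef, Finset.mul_sum]; exact Finset.sum_congr rfl fun ℓ _ => by ring
    have := abs_le.1 hgb
    rw [hvdef]
    nlinarith [this.1, this.2]
  -- coefficients of v in the eigenbasis
  have hVsum : ∀ j : Fin n, (⟪f j, v⟫ : ℂ) = ∑ ℓ ∈ S, c ℓ * ⟪f j, ξ ℓ⟫ := by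
    intro j
    simp only [hvdef, inner_sum, inner_smul_right]
  have hVJ : ∀ j ∈ J, (⟪f j, v⟫ : ℂ) = 0 := fun j hj => (hVsum j).trans (hker j hj)
  have hsplit : ‖v‖ ^ 2 = ∑ j ∈ Finset.univ \ J, ‖(⟪f j, v⟫ : ℂ)‖ ^ 2 := by
    rw [parseval_sq f v, ← Finset.sum_sdiff (Finset.subset_univ J)]
    have hz : ∑ j ∈ J, ‖(⟪f j, v⟫ : ℂ)‖ ^ 2 = 0 :=
      Finset.sum_eq_zero fun j hj => by rw [hVJ j hj]; simp
    rw [hz, add_zero]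
  -- j outside J is spectrally far from all μ ℓ, ℓ ∈ S
  have hfar : ∀ j ∈ Finset.univ \ J, ∀ ℓ ∈ S, δ < |lam j - μ ℓ| := by
    intro j hj ℓ hℓ
    rw [Finset.mem_sdiff] at hj
    by_contra hle
    push_neg at hle
    exact hj.2 (Finset.mem_biUnion.2 ⟨ℓ, hℓ, Finset.mem_filter.2 ⟨Finset.mem_univ _, hle⟩⟩)
  -- eigenvalue coefficient identity
  have hfD : ∀ (j : Fin n) (w : H) (ν : ℝ),
      (⟪f j, D w - (ν : ℂ) • w⟫ : ℂ) = ((lam j - ν : ℝ) : ℂ) * ⟪f j, w⟫ := by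
    intro j w ν
    rw [inner_sub_right, inner_smul_right]
    have h1 : (⟪f j, D w⟫ : ℂ) = ((lam j : ℝ) : ℂ) * ⟪f j, w⟫ := by
      rw [← hD (f j) w]
      rw [hlamdef, hfdef, hD.apply_eigenvectorBasis hn j, inner_smul_left]
      simp [Complex.conj_ofReal]
    rw [h1]
    push_cast
    ring
  have hNid : ∀ ν : ℝ,
      ∑ j, (lam j - ν) ^ 2 * ‖(⟪f j, v⟫ : ℂ)‖ ^ 2 = ‖D v - (ν : ℂ) • v‖ ^ 2 := by
    intro ν
    rw [parseval_sq f (D v - (ν : ℂ) • v)]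
    refine Finset.sum_congr rfl fun j _ => ?_
    rw [hfD j v ν, norm_mul, mul_pow, Complex.norm_real, Real.norm_eq_abs, sq_abs]
  -- D v - ν v as a combination
  have hDv : ∀ ν : ℝ, D v - (ν : ℂ) • v = ∑ ℓ ∈ S, c ℓ • (D (ξ ℓ) - (ν : ℂ) • ξ ℓ) := by
    intro ν
    rw [hvdef, map_sum, Finset.smul_sum, ← Finset.sum_sub_distrib]
    refine Finset.sum_congr rfl fun ℓ _ => ?_
    rw [map_smul, smul_comm ((ν : ℂ)) (c ℓ), ← smul_sub]
  -- case ε₁ = 0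
  rcases eq_or_lt_of_le hε₁0 with hε₁z | hε₁pos
  · have hδ0 : δ = 0 := by rw [hδdef, hrdef, ← hε₁z, Real.sqrt_zero, mul_zero]
    have hvz : ‖v‖ ^ 2 = 0 := by
      rw [hsplit]
      refine Finset.sum_eq_zero fun j hj => ?_
      have hVj : (⟪f j, v⟫ : ℂ) = 0 := by
        rw [hVsum]
        refine Finset.sum_eq_zero fun ℓ hℓ => ?_
        have hxz : D (ξ ℓ) - (μ ℓ : ℂ) • ξ ℓ = 0 := by
          have h := happrox ℓ
          rw [← hε₁z] at h
          have hn0 : ‖D (ξ ℓ) - (μ ℓ : ℂ) • ξ ℓ‖ = 0 := by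
            nlinarith [norm_nonneg (D (ξ ℓ) - (μ ℓ : ℂ) • ξ ℓ)]
          exact norm_eq_zero.1 hn0
        have h0 : ((lam j - μ ℓ : ℝ) : ℂ) * ⟪f j, ξ ℓ⟫ = 0 := by
          rw [← hfD j (ξ ℓ) (μ ℓ), hxz, inner_zero_right]
        have hne : ((lam j - μ ℓ : ℝ) : ℂ) ≠ 0 := by
          have hf := hfar j hj ℓ hℓ
          rw [hδ0] at hf
          simp only [ne_eq, Complex.ofReal_eq_zero]
          intro hx
          rw [hx] at hf
          simp at hf
        rcases mul_eq_zero.1 h0 with h | h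
        · exact absurd h hne
        · rw [h, mul_zero]
      rw [hVj]; simp
    nlinarith [hlow, hC]
  -- case ε₁ > 0
  · have hrpos : 0 < r := by rw [hrdef]; exact Real.sqrt_pos.2 hε₁pos
    have hδpos : 0 < δ := by rw [hδdef]; linarith
    set m := μ ℓm with hmdef
    set M := μ ℓM with hMdef
    have hmM : m ≤ M := hmin ℓM hℓM
    set W := M - m with hWdef
    have hW0 : 0 ≤ W := by rw [hWdef]; linarith
    have hsp : ε₂ * W ^ 2 ≤ ε₁ := by
      have h := hspread ℓM ℓm
      rw [hWdef, hMdef, hmdef]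
      exact h
    set cen := (m + M) / 2 with hcendef
    set K2 := 2 * (3 * δ ^ 2 + 3 * δ * W + W ^ 2) with hK2def
    have hK2pos : 0 < K2 := by rw [hK2def]; nlinarith
    set κ := 1 / K2 with hκdef
    have hκpos : 0 < κ := by rw [hκdef]; positivity
    set s := Real.sqrt (1 + ε₂) with hsdef
    have hs2 : s ^ 2 = 1 + ε₂ := Real.sq_sqrt (by linarith)
    have hs0 : 0 ≤ s := Real.sqrt_nonneg _
    have hξs : ∀ ℓ, ‖ξ ℓ‖ ≤ s := by
      intro ℓ
      have h1 : ‖ξ ℓ‖ ^ 2 ≤ 1 + ε₂ := by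
        have := abs_le.1 (hnorm ℓ); linarith [this.1]
      calc ‖ξ ℓ‖ = Real.sqrt (‖ξ ℓ‖ ^ 2) := (Real.sqrt_sq (norm_nonneg _)).symm
        _ ≤ s := Real.sqrt_le_sqrt h1
    -- envelope
    have henv : ∀ j ∈ Finset.univ \ J,
        1 ≤ κ * ((lam j - m) ^ 2 + 4 * (lam j - cen) ^ 2 + (lam j - M) ^ 2) := by
      intro j hj
      have hout : lam j ≤ m - δ ∨ M + δ ≤ lam j := by
        by_contra hmid
        push_neg at hmid
        obtain ⟨h1, h2⟩ := hmid
        have hexists : ∃ ℓ ∈ S, |lam j - μ ℓ| ≤ δ := by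
          rcases lt_or_ge (lam j) m with hlt | hge
          · refine ⟨ℓm, hℓm, ?_⟩
            rw [abs_le]
            constructor <;> [linarith [hmdef]; linarith [hmdef, hδpos]]
          rcases le_or_gt (lam j) M with hleM | hgtM
          · exact hchain (lam j) (by linarith [hmdef]) (by linarith [hMdef])
          · refine ⟨ℓM, hℓM, ?_⟩
            rw [abs_le]
            constructor <;> [linarith [hMdef, hδpos]; linarith [hMdef]]
        obtain ⟨ℓ, hℓS, hℓd⟩ := hexists
        exact absurd hℓd (not_le.2 (hfar j hj ℓ hℓS))
      have hE := gluing_envelope δ m M (lam j) hδpos.le hmM hout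
      rw [← hWdef, ← hcendef, ← hK2def] at hE
      calc (1 : ℝ) = κ * K2 := by rw [hκdef]; field_simp
        _ ≤ κ * ((lam j - m) ^ 2 + 4 * (lam j - cen) ^ 2 + (lam j - M) ^ 2) :=
            mul_le_mul_of_nonneg_left hE hκpos.le
    -- row sums for reference points
    have hrowD : ∀ ν : ℝ, m ≤ ν → ν ≤ M → ∀ ℓ ∈ S,
        ∑ ℓ' ∈ S.erase ℓ, ‖(⟪D (ξ ℓ') - (ν : ℂ) • ξ ℓ', D (ξ ℓ) - (ν : ℂ) • ξ ℓ⟫ : ℂ)‖ ≤ ε₁ := by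
      intro ν hν1 hν2 ℓ _
      refine le_trans (Finset.sum_le_sum_of_subset_of_nonneg
        (Finset.erase_subset_erase ℓ (Finset.subset_univ S))
        (fun _ _ _ => norm_nonneg _)) (hDoff ℓ ν ⟨ℓm, ℓM, by linarith [hmdef], by linarith [hMdef]⟩)
    -- bound for each reference point
    have hNbound : ∀ ν : ℝ, m ≤ ν → ν ≤ M →
        ‖D v - (ν : ℂ) • v‖ ^ 2 ≤ ∑ ℓ ∈ S, ‖c ℓ‖ ^ 2 * ((r + |ν - μ ℓ| * s) ^ 2 + ε₁) := by
      intro ν hν1 hν2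
      have hgb := gram_bounds S c (fun ℓ => D (ξ ℓ) - (ν : ℂ) • ξ ℓ) ε₁
        (fun ℓ hℓ => hrowD ν hν1 hν2 ℓ hℓ)
      have hdiag : ∀ ℓ ∈ S, ‖D (ξ ℓ) - (ν : ℂ) • ξ ℓ‖ ^ 2 ≤ (r + |ν - μ ℓ| * s) ^ 2 := by
        intro ℓ _
        have hxν : ‖D (ξ ℓ) - (ν : ℂ) • ξ ℓ‖ ≤ r + |ν - μ ℓ| * s := by
          have hdecomp : D (ξ ℓ) - (ν : ℂ) • ξ ℓ
              = (D (ξ ℓ) - (μ ℓ : ℂ) • ξ ℓ) + ((μ ℓ - ν : ℝ) : ℂ) • ξ ℓ := by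
            rw [Complex.ofReal_sub, sub_smul]
            abel
          rw [hdecomp]
          refine le_trans (norm_add_le _ _) ?_
          have h1 : ‖D (ξ ℓ) - (μ ℓ : ℂ) • ξ ℓ‖ ≤ r := by
            rw [hrdef]
            exact (Real.le_sqrt (norm_nonneg _) hε₁0).2 (happrox ℓ)
          have h2 : ‖((μ ℓ - ν : ℝ) : ℂ) • ξ ℓ‖ ≤ |ν - μ ℓ| * s := by
            rw [norm_smul, Complex.norm_real, Real.norm_eq_abs, abs_sub_comm]
            exact mul_le_mul_of_nonneg_left (hξs ℓ) (abs_nonneg _)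
          linarith
        exact pow_le_pow_left₀ (norm_nonneg _) hxν 2
      have habs := abs_le.1 hgb
      have hsum1 : ∑ ℓ ∈ S, ‖c ℓ‖ ^ 2 * ‖D (ξ ℓ) - (ν : ℂ) • ξ ℓ‖ ^ 2
          ≤ ∑ ℓ ∈ S, ‖c ℓ‖ ^ 2 * (r + |ν - μ ℓ| * s) ^ 2 :=
        Finset.sum_le_sum fun ℓ hℓ => mul_le_mul_of_nonneg_left (hdiag ℓ hℓ) (sq_nonneg _)
      have hrw : ∑ ℓ ∈ S, ‖c ℓ‖ ^ 2 * ((r + |ν - μ ℓ| * s) ^ 2 + ε₁)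
          = ∑ ℓ ∈ S, ‖c ℓ‖ ^ 2 * (r + |ν - μ ℓ| * s) ^ 2 + ε₁ * C := by
        rw [hCdef, Finset.mul_sum, ← Finset.sum_add_distrib]
        exact Finset.sum_congr rfl fun ℓ _ => by ring
      rw [hDv ν, hrw]
      linarith [habs.2]
    -- assembling the three reference points
    have hchain1 : ‖v‖ ^ 2 ≤ κ * (∑ j,
        ((lam j - m) ^ 2 + 4 * (lam j - cen) ^ 2 + (lam j - M) ^ 2) * ‖(⟪f j, v⟫ : ℂ)‖ ^ 2) := by
      rw [hsplit]
      calc ∑ j ∈ Finset.univ \ J, ‖(⟪f j, v⟫ : ℂ)‖ ^ 2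
          ≤ ∑ j ∈ Finset.univ \ J,
              κ * (((lam j - m) ^ 2 + 4 * (lam j - cen) ^ 2 + (lam j - M) ^ 2)
                * ‖(⟪f j, v⟫ : ℂ)‖ ^ 2) := by
            refine Finset.sum_le_sum fun j hj => ?_
            rw [← mul_assoc]
            exact le_mul_of_one_le_left (sq_nonneg _) (henv j hj)
        _ ≤ ∑ j, κ * (((lam j - m) ^ 2 + 4 * (lam j - cen) ^ 2 + (lam j - M) ^ 2)
                * ‖(⟪f j, v⟫ : ℂ)‖ ^ 2) := by
            refine Finset.sum_le_sum_of_subset_of_nonneg (Finset.subset_univ _) fun j _ _ => ?_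
            have hEnn : (0:ℝ) ≤ (lam j - m) ^ 2 + 4 * (lam j - cen) ^ 2 + (lam j - M) ^ 2 := by
              positivity
            exact mul_nonneg hκpos.le (mul_nonneg hEnn (sq_nonneg _))
        _ = κ * ∑ j, ((lam j - m) ^ 2 + 4 * (lam j - cen) ^ 2 + (lam j - M) ^ 2)
                * ‖(⟪f j, v⟫ : ℂ)‖ ^ 2 := by rw [Finset.mul_sum]
    have hNsum : ∑ j, ((lam j - m) ^ 2 + 4 * (lam j - cen) ^ 2 + (lam j - M) ^ 2)
          * ‖(⟪f j, v⟫ : ℂ)‖ ^ 2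
        = ‖D v - (m : ℂ) • v‖ ^ 2 + 4 * ‖D v - (cen : ℂ) • v‖ ^ 2 + ‖D v - (M : ℂ) • v‖ ^ 2 := by
      rw [← hNid m, ← hNid cen, ← hNid M, Finset.mul_sum, ← Finset.sum_add_distrib,
        ← Finset.sum_add_distrib]
      exact Finset.sum_congr rfl fun j _ => by ring
    set F : Fin L → ℝ := fun ℓ => ((r + |m - μ ℓ| * s) ^ 2 + ε₁)
      + 4 * ((r + |cen - μ ℓ| * s) ^ 2 + ε₁) + ((r + |M - μ ℓ| * s) ^ 2 + ε₁) with hFdef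
    have htot : ‖v‖ ^ 2 ≤ κ * ∑ ℓ ∈ S, ‖c ℓ‖ ^ 2 * F ℓ := by
      refine le_trans hchain1 ?_
      rw [hNsum]
      refine mul_le_mul_of_nonneg_left ?_ hκpos.le
      have h1 := hNbound m le_rfl hmM
      have h2 := hNbound cen (by rw [hcendef]; linarith) (by rw [hcendef]; linarith)
      have h3 := hNbound M hmM le_rfl
      have h4 : 4 * ‖D v - (cen : ℂ) • v‖ ^ 2
          ≤ 4 * ∑ ℓ ∈ S, ‖c ℓ‖ ^ 2 * ((r + |cen - μ ℓ| * s) ^ 2 + ε₁) := by linarith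
      calc ‖D v - (m : ℂ) • v‖ ^ 2 + 4 * ‖D v - (cen : ℂ) • v‖ ^ 2 + ‖D v - (M : ℂ) • v‖ ^ 2
          ≤ (∑ ℓ ∈ S, ‖c ℓ‖ ^ 2 * ((r + |m - μ ℓ| * s) ^ 2 + ε₁))
            + 4 * (∑ ℓ ∈ S, ‖c ℓ‖ ^ 2 * ((r + |cen - μ ℓ| * s) ^ 2 + ε₁))
            + (∑ ℓ ∈ S, ‖c ℓ‖ ^ 2 * ((r + |M - μ ℓ| * s) ^ 2 + ε₁)) := by linarith
        _ = ∑ ℓ ∈ S, ‖c ℓ‖ ^ 2 * F ℓ := by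
            rw [Finset.mul_sum, ← Finset.sum_add_distrib, ← Finset.sum_add_distrib]
            exact Finset.sum_congr rfl fun ℓ _ => by rw [hFdef]; ring
    -- the numeric bound
    have hFlt : ∀ ℓ ∈ S, F ℓ < (1 - 2 * ε₂) * K2 := by
      intro ℓ hℓ
      have ha0 : 0 ≤ μ ℓ - m := by
        have := hmin ℓ hℓ; linarith
      have haW : μ ℓ - m ≤ W := by
        have := hmax ℓ hℓ; rw [hWdef]; linarith
      have hnum := gluing_numeric r s W (μ ℓ - m) ε₁ ε₂ hrpos hr2 hs0 hs2 hε₂0 hε₂ ha0 haW hsp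
      have e1 : |m - μ ℓ| = μ ℓ - m := by rw [abs_sub_comm, abs_of_nonneg ha0]
      have e2 : |M - μ ℓ| = W - (μ ℓ - m) := by
        have hM' : M - μ ℓ = W - (μ ℓ - m) := by rw [hWdef]; ring
        rw [abs_of_nonneg (by rw [hM']; linarith), hM']
      have e3 : |cen - μ ℓ| = |W - 2 * (μ ℓ - m)| / 2 := by
        have hc' : cen - μ ℓ = (W - 2 * (μ ℓ - m)) / 2 := by rw [hcendef, hWdef]; ring
        rw [hc', abs_div]
        norm_num
      rw [hFdef]
      simp only
      rw [e1, e2, e3, hK2def, hδdef]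
      linarith [hnum]
    -- final contradiction
    have hlt : ∑ ℓ ∈ S, ‖c ℓ‖ ^ 2 * F ℓ < ∑ ℓ ∈ S, ‖c ℓ‖ ^ 2 * ((1 - 2 * ε₂) * K2) := by
      refine Finset.sum_lt_sum
        (fun ℓ hℓ => mul_le_mul_of_nonneg_left (hFlt ℓ hℓ).le (sq_nonneg _))
        ⟨ℓ₀, hℓ₀S, mul_lt_mul_of_pos_left (hFlt ℓ₀ hℓ₀S) (pow_pos (norm_pos_iff.2 hℓ₀ne) 2)⟩
    have hsum2 : ∑ ℓ ∈ S, ‖c ℓ‖ ^ 2 * ((1 - 2 * ε₂) * K2) = (1 - 2 * ε₂) * K2 * C := by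
      rw [hCdef, Finset.mul_sum]
      exact Finset.sum_congr rfl fun ℓ _ => by ring
    have hfinal : κ * ∑ ℓ ∈ S, ‖c ℓ‖ ^ 2 * F ℓ < (1 - 2 * ε₂) * C := by
      calc κ * ∑ ℓ ∈ S, ‖c ℓ‖ ^ 2 * F ℓ
          < κ * ((1 - 2 * ε₂) * K2 * C) := by
            rw [← hsum2]
            exact mul_lt_mul_of_pos_left hlt hκpos
        _ = (1 - 2 * ε₂) * C := by
            rw [hκdef]
            field_simp
    linarith [hlow, htot, hfinal]

/-- Linear algebra gluing lemma (Lemma 5.4): a family of almost-orthonormal approximate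
eigensections, with approximate eigenvalues `μ ℓ`, produces genuine eigenvalues of the
self-adjoint operator `D` (counted with multiplicity, realized by orthonormal
eigenvectors) within `4√ε₁` of the approximate eigenvalues. -/
theorem gluing_lemma_eigenvalues {H : Type*} [NormedAddCommGroup H]
    [InnerProductSpace ℂ H] [FiniteDimensional ℂ H]
    (D : H →ₗ[ℂ] H) (hD : D.IsSymmetric) (L : ℕ) (ε₁ ε₂ : ℝ)
    (hε₂0 : 0 < ε₂) (hε₂ : ε₂ < 1 / 4)
    (ξ : Fin L → H) (μ : Fin L → ℝ)
    (hspread : ∀ ℓ ℓ', ε₂ * (μ ℓ - μ ℓ') ^ 2 ≤ ε₁)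
    (hnorm : ∀ ℓ, |1 - ‖ξ ℓ‖ ^ 2| ≤ ε₂)
    (hoff : ∀ ℓ, ∑ ℓ' ∈ Finset.univ.erase ℓ, ‖⟪ξ ℓ', ξ ℓ⟫‖ ≤ ε₂)
    (happrox : ∀ ℓ, ‖D (ξ ℓ) - (μ ℓ : ℂ) • ξ ℓ‖ ^ 2 ≤ ε₁)
    (hDoff : ∀ ℓ, ∀ ν : ℝ, (∃ ℓ₁ ℓ₂, μ ℓ₁ ≤ ν ∧ ν ≤ μ ℓ₂) →
      ∑ ℓ' ∈ Finset.univ.erase ℓ,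
        ‖⟪D (ξ ℓ') - (ν : ℂ) • ξ ℓ', D (ξ ℓ) - (ν : ℂ) • ξ ℓ⟫‖ ≤ ε₁) :
    ∃ (lam : Fin L → ℝ) (e : Fin L → H), Orthonormal ℂ e ∧
      (∀ ℓ, D (e ℓ) = (lam ℓ : ℂ) • e ℓ) ∧
      ∀ ℓ, |lam ℓ - μ ℓ| ≤ 4 * Real.sqrt ε₁ := by
  have hn : Module.finrank ℂ H = Module.finrank ℂ H := rfl
  set lam := hD.eigenvalues hn with hlamdef
  set t : Fin L → Finset (Fin (Module.finrank ℂ H)) :=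
    fun ℓ => Finset.univ.filter (fun j => |lam j - μ ℓ| ≤ 4 * Real.sqrt ε₁) with htdef
  have hall : ∀ (N : ℕ) (S : Finset (Fin L)), S.card ≤ N → S.card ≤ (S.biUnion t).card := by
    intro N
    induction N with
    | zero =>
      intro S hS
      have hS0 : S = ∅ := Finset.card_eq_zero.1 (Nat.le_zero.1 hS)
      simp [hS0]
    | succ N ih =>
      intro S hS
      rcases S.eq_empty_or_nonempty with rfl | hSne
      · simp
      obtain ⟨ℓm, hℓm, hmin⟩ := S.exists_min_image μ hSne
      obtain ⟨ℓM, hℓM, hmax⟩ := S.exists_max_image μ hSne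
      by_cases hchain : ∀ x : ℝ, μ ℓm ≤ x → x ≤ μ ℓM → ∃ ℓ ∈ S, |x - μ ℓ| ≤ 4 * Real.sqrt ε₁
      · exact glue_chain_case D hD ε₁ ε₂ hε₂0 hε₂ ξ μ hspread hnorm hoff happrox hDoff hn
          S hSne ℓm ℓM hℓm hℓM hmin hmax hchain
      · push_neg at hchain
        obtain ⟨x, hx1, hx2, hx3⟩ := hchain
        have hδ0 : (0:ℝ) ≤ 4 * Real.sqrt ε₁ := by positivity
        set S₁ := S.filter (fun ℓ => μ ℓ < x) with hS₁def
        set S₂ := S.filter (fun ℓ => ¬ μ ℓ < x) with hS₂def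
        have hm1 : ℓm ∈ S₁ := by
          refine Finset.mem_filter.2 ⟨hℓm, ?_⟩
          have h := hx3 ℓm hℓm
          rw [abs_of_nonneg (by linarith : (0:ℝ) ≤ x - μ ℓm)] at h
          linarith
        have hM2 : ℓM ∈ S₂ := Finset.mem_filter.2 ⟨hℓM, not_lt.2 hx2⟩
        have hcard12 : S₁.card + S₂.card = S.card :=
          Finset.card_filter_add_card_filter_not _
        have hc1 : S₁.card ≤ N := by
          have h2pos : 0 < S₂.card := Finset.card_pos.2 ⟨ℓM, hM2⟩
          omega
        have hc2 : S₂.card ≤ N := by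
          have h1pos : 0 < S₁.card := Finset.card_pos.2 ⟨ℓm, hm1⟩
          omega
        have hsub1 := ih S₁ hc1
        have hsub2 := ih S₂ hc2
        have hdisj : Disjoint (S₁.biUnion t) (S₂.biUnion t) := by
          rw [Finset.disjoint_left]
          intro j hj1 hj2
          obtain ⟨ℓ₁, hℓ₁, hjt1⟩ := Finset.mem_biUnion.1 hj1
          obtain ⟨ℓ₂, hℓ₂, hjt2⟩ := Finset.mem_biUnion.1 hj2
          have ha1 := (Finset.mem_filter.1 hjt1).2
          have ha2 := (Finset.mem_filter.1 hjt2).2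
          have hb1 : μ ℓ₁ < x := (Finset.mem_filter.1 hℓ₁).2
          have hb2 : x ≤ μ ℓ₂ := not_lt.1 (Finset.mem_filter.1 hℓ₂).2
          have hx1' := hx3 ℓ₁ (Finset.mem_filter.1 hℓ₁).1
          have hx2' := hx3 ℓ₂ (Finset.mem_filter.1 hℓ₂).1
          rw [abs_of_nonneg (by linarith : (0:ℝ) ≤ x - μ ℓ₁)] at hx1'
          rw [abs_of_nonpos (by linarith : x - μ ℓ₂ ≤ 0)] at hx2'
          have d1 := abs_le.1 ha1
          have d2 := abs_le.1 ha2
          linarith [d1.2, d2.1]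
        have hunion : S.biUnion t = (S₁.biUnion t) ∪ (S₂.biUnion t) := by
          ext j
          simp only [Finset.mem_biUnion, Finset.mem_union, hS₁def, hS₂def, Finset.mem_filter]
          constructor
          · rintro ⟨ℓ, hℓ, hj⟩
            by_cases hx' : μ ℓ < x
            · exact Or.inl ⟨ℓ, ⟨hℓ, hx'⟩, hj⟩
            · exact Or.inr ⟨ℓ, ⟨hℓ, hx'⟩, hj⟩
          · rintro (⟨ℓ, ⟨hℓ, _⟩, hj⟩ | ⟨ℓ, ⟨hℓ, _⟩, hj⟩) <;> exact ⟨ℓ, hℓ, hj⟩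
        rw [hunion, Finset.card_union_of_disjoint hdisj]
        omega
  have hallcond : ∀ S : Finset (Fin L), S.card ≤ (S.biUnion t).card :=
    fun S => hall S.card S le_rfl
  obtain ⟨g, hginj, hgmem⟩ := (Finset.all_card_le_biUnion_card_iff_exists_injective t).1 hallcond
  refine ⟨fun ℓ => lam (g ℓ), fun ℓ => (hD.eigenvectorBasis hn) (g ℓ), ?_, ?_, ?_⟩
  · exact (hD.eigenvectorBasis hn).orthonormal.comp g hginj
  · intro ℓ
    exact hD.apply_eigenvectorBasis hn (g ℓ)
  · intro ℓ
    have h := hgmem ℓ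
    rw [htdef] at h
    exact (Finset.mem_filter.1 h).2
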